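/- arXiv:1802.07701 — 6 statements merged into one kernel-verified Lean document; each statement's English description precedes it below -/
import Mathlib

section
/- Let α and β be polynomials in ℤ[X]. Define the sequence of polynomials K_n := X·(α + X·β)^n for n ≥ 0, and define the sequence K̄_n recursively by K̄_0 := X² and K̄_n := α·K̄_{n−1} + β·K_{n−1} for n ≥ 1. Then for every n ≥ 0, K̄_n = (α + X·β)^n + (X² − 1)·α^n. -/
open Polynomial

/-- With K_n := X·(α + X·β)^n and K̄ defined recursively by
K̄_0 = X², K̄_n = α·K̄_{n−1} + β·K_{n−1}, we have
K̄_n = (α + X·β)^n + (X² − 1)·α^n for all n. -/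
theorem stmt_0 (α β : Polynomial ℤ) (Kbar : ℕ → Polynomial ℤ)
    (h0 : Kbar 0 = X ^ 2)
    (hrec : ∀ n : ℕ, Kbar (n + 1) = α * Kbar n + β * (X * (α + X * β) ^ n)) :
    ∀ n : ℕ, Kbar n = (α + X * β) ^ n + (X ^ 2 - 1) * α ^ n := by
  intro n
  induction n with
  | zero => simp [h0]
  | succ n ih => rw [hrec, ih]; ring
end

section
/- Define the sequence of integer polynomials C_n recursively by C_0 := x² and C_n := (x+2)·C_{n−1} + x·(2x+2)^{n−1} for n ≥ 1. Then for every n ≥ 0, C_n = (2x+2)^n + (x² − 1)·(x+2)^n. -/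
open Polynomial

/-- with C_0 = x² and C_n = (x+2)·C_{n−1} + x·(2x+2)^{n−1}, we have
C_n = (2x+2)^n + (x²−1)·(x+2)^n for all n. -/
theorem stmt_11 (C : ℕ → Polynomial ℤ)
    (h0 : C 0 = X ^ 2)
    (hrec : ∀ n : ℕ, C (n + 1) = (X + 2) * C n + X * (2 * X + 2) ^ n) :
    ∀ n : ℕ, C n = (2 * X + 2) ^ n + (X ^ 2 - 1) * (X + 2) ^ n := by
  intro n
  induction n with
  | zero => simpa using h0
  | succ n ih =>
    rw [hrec, ih]
    ring
end

section
/- Define the sequence of integer polynomials B_n recursively by B_0 := x² and B_n := (x+2)·B_{n−1} + (2x+3)·x·(2x²+4x+2)^{n−1} for n ≥ 1. Then for every n ≥ 0, B_n = (2x²+4x+2)^n + (x² − 1)·(x+2)^n. Moreover, if b(n,1) denotes the coefficient of x in B_n, then 2·b(n,1) = 3n·2^n for all n ≥ 0. -/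
open Polynomial

/-- with B_0 = x² and B_n = (x+2)·B_{n−1} + (2x+3)·x·(2x²+4x+2)^{n−1},
we have B_n = (2x²+4x+2)^n + (x²−1)·(x+2)^n for all n; moreover twice the coefficient
of x in B_n equals 3n·2^n. -/
theorem stmt_13 (B : ℕ → Polynomial ℤ)
    (h0 : B 0 = X ^ 2)
    (hrec : ∀ n : ℕ,
      B (n + 1) = (X + 2) * B n + (2 * X + 3) * (X * (2 * X ^ 2 + 4 * X + 2) ^ n)) :
    (∀ n : ℕ, B n = (2 * X ^ 2 + 4 * X + 2) ^ n + (X ^ 2 - 1) * (X + 2) ^ n) ∧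
    (∀ n : ℕ, 2 * (B n).coeff 1 = 3 * (n : ℤ) * 2 ^ n) := by
  have key : ∀ n : ℕ, B n = (2 * X ^ 2 + 4 * X + 2) ^ n + (X ^ 2 - 1) * (X + 2) ^ n := by
    intro n
    induction n with
    | zero => simp [h0]
    | succ n ih =>
        rw [hrec n, ih]
        ring
  have hQ0 : ∀ n : ℕ, ((2 * X ^ 2 + 4 * X + 2 : Polynomial ℤ) ^ n).coeff 0 = 2 ^ n := by
    intro n
    rw [coeff_zero_eq_eval_zero]
    simp
  have hc0 : ∀ n : ℕ, (B n).coeff 0 = 0 := by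
    intro n
    rw [key n, coeff_zero_eq_eval_zero]
    simp
  have hx : ∀ p : Polynomial ℤ, (X * p).coeff 1 = p.coeff 0 := fun p => coeff_X_mul p 0
  refine ⟨key, ?_⟩
  intro n
  induction n with
  | zero => simp [h0]
  | succ n ih =>
      have e : B (n + 1) = X * B n + 2 * B n
          + X * ((2 * X + 3) * (2 * X ^ 2 + 4 * X + 2) ^ n) := by
        rw [hrec n]; ring
      have h3 : ((2 * X + 3 : Polynomial ℤ) * (2 * X ^ 2 + 4 * X + 2) ^ n).coeff 0
          = 3 * 2 ^ n := by
        rw [mul_coeff_zero, hQ0]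
        simp
      rw [e]
      simp only [coeff_add, hx, coeff_smul]
      rw [hc0, h3]
      have h2 : ((2 : Polynomial ℤ) * B n).coeff 1 = 2 * (B n).coeff 1 := by
        simp [coeff_ofNat_mul]
      rw [h2]
      push_cast
      ring_nf
      ring_nf at ih
      linarith [ih]
end

section
/- Define the sequence of integer polynomials R_n recursively by R_0 := x² and R_n := (2x+3)·R_{n−1} + (x+2)·x·(x²+4x+3)^{n−1} for n ≥ 1. Then for every n ≥ 0, R_n = (x²+4x+3)^n + (x² − 1)·(2x+3)^n. -/
open Polynomial

/-- with R_0 = x² and R_n = (2x+3)·R_{n−1} + (x+2)·x·(x²+4x+3)^{n−1},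
we have R_n = (x²+4x+3)^n + (x²−1)·(2x+3)^n for all n. -/
theorem stmt_14 (R : ℕ → Polynomial ℤ)
    (h0 : R 0 = X ^ 2)
    (hrec : ∀ n : ℕ,
      R (n + 1) = (2 * X + 3) * R n + (X + 2) * (X * (X ^ 2 + 4 * X + 3) ^ n)) :
    ∀ n : ℕ, R n = (X ^ 2 + 4 * X + 3) ^ n + (X ^ 2 - 1) * (2 * X + 3) ^ n := by
  intro n
  induction n with
  | zero => simp [h0]
  | succ n ih =>
    rw [hrec n, ih]
    ring
end

section
/- Define the sequence of integer polynomials S_n recursively by S_0 := x² and S_n := (x²+3x+3)·S_{n−1} + x·(x²+4x+3)^{n−1} for n ≥ 1. Then for every n ≥ 0, S_n = (x²+4x+3)^n + (x² − 1)·(x²+3x+3)^n. -/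
open Polynomial

/-- with S_0 = x² and S_n = (x²+3x+3)·S_{n−1} + x·(x²+4x+3)^{n−1},
we have S_n = (x²+4x+3)^n + (x²−1)·(x²+3x+3)^n for all n. -/
theorem stmt_16 (S : ℕ → Polynomial ℤ)
    (h0 : S 0 = X ^ 2)
    (hrec : ∀ n : ℕ,
      S (n + 1) = (X ^ 2 + 3 * X + 3) * S n + X * (X ^ 2 + 4 * X + 3) ^ n) :
    ∀ n : ℕ, S n = (X ^ 2 + 4 * X + 3) ^ n + (X ^ 2 - 1) * (X ^ 2 + 3 * X + 3) ^ n := by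
  intro n
  induction n with
  | zero => simpa using h0
  | succ n ih =>
    rw [hrec, ih]
    ring
end

section
/- Let s(n,k) denote the coefficient of x^k in the integer polynomial (x²+4x+3)^n + (x² − 1)·(x²+3x+3)^n. Then for all n ≥ 0: s(n, 2n+1) = 3n and 2·s(n, 2n) = 3n·(3n − 1); and for all n ≥ 1: 2·s(n, 2n−1) = n·(3n−1)·(3n−2). -/
open Polynomial

lemma coeff_mul_aux (a b : ℤ) (s : Polynomial ℤ) (d : ℕ) :
    ((X^2 + C a * X + C b) * s).coeff (d+2)
      = s.coeff d + a * s.coeff (d+1) + b * s.coeff (d+2) := by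
  have h : (X^2 + C a*X + C b) * s = X^2*s + C a*(X*s) + C b*s := by ring
  rw [h]
  simp only [coeff_add, coeff_C_mul]
  rw [coeff_X_pow_mul]
  rw [show d + 2 = (d+1) + 1 from rfl, coeff_X_mul]

lemma vanish_aux (a b : ℤ) (n k : ℕ) (h : 2*n < k) :
    ((X^2 + C a * X + C b)^n).coeff k = 0 := by
  apply coeff_eq_zero_of_natDegree_lt
  calc ((X^2 + C a * X + C b)^n).natDegree ≤ n * (X^2 + C a * X + C b).natDegree :=
        natDegree_pow_le
    _ ≤ n * 2 := by gcongr; compute_degree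
    _ < k := by omega

lemma aux_main (a b : ℤ) (n : ℕ) :
    ((X^2 + C a * X + C b)^n).coeff (2*n) = 1 ∧
    ((X^2 + C a * X + C b)^(n+1)).coeff (2*n+1) = ((n:ℤ)+1)*a ∧
    2*((X^2 + C a * X + C b)^(n+1)).coeff (2*n) = 2*((n:ℤ)+1)*b + ((n:ℤ)+1)*(n:ℤ)*a^2 ∧
    6*((X^2 + C a * X + C b)^(n+2)).coeff (2*n+1)
      = 6*((n:ℤ)+2)*((n:ℤ)+1)*a*b + ((n:ℤ)+2)*((n:ℤ)+1)*(n:ℤ)*a^3 := by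
  induction n with
  | zero =>
      refine ⟨by simp, ?_, ?_, ?_⟩
      · simp only [pow_one, coeff_add, coeff_C_mul, coeff_X, coeff_C, coeff_X_pow,
          Nat.cast_zero, zero_add, mul_one]
        norm_num
      · simp only [pow_one, coeff_add, coeff_C_mul, coeff_X, coeff_C, coeff_X_pow,
          Nat.cast_zero, zero_add]
        norm_num
      · rw [show ((X^2 + C a * X + C b)^(0+2)) = (X^2 + C a*X + C b) * ((X^2 + C a*X + C b)^(0+1)) from by ring]
        rw [coeff_mul, Finset.Nat.sum_antidiagonal_eq_sum_range_succ_mk]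
        simp only [Finset.sum_range_succ, Finset.sum_range_zero, pow_one]
        simp only [coeff_add, coeff_C_mul, coeff_X, coeff_C, coeff_X_pow]
        norm_num
        rw [show ((b : Polynomial ℤ)).coeff 1 = 0 from by rw [← C_eq_intCast, coeff_C]; norm_num]
        ring
  | succ n ih =>
      obtain ⟨h1, h2, h3, h4⟩ := ih
      have E1 : ((X^2 + C a * X + C b)^(n+2)) = (X^2 + C a*X + C b) * ((X^2 + C a*X + C b)^(n+1)) := by ring
      have E0 : ((X^2 + C a * X + C b)^(n+1)) = (X^2 + C a*X + C b) * ((X^2 + C a*X + C b)^n) := by ring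
      have E2 : ((X^2 + C a * X + C b)^(n+3)) = (X^2 + C a*X + C b) * ((X^2 + C a*X + C b)^(n+2)) := by ring
      have z1 := vanish_aux a b n (2*n+1) (by omega)
      have z2 := vanish_aux a b n (2*n+2) (by omega)
      have z3 := vanish_aux a b (n+1) (2*n+3) (by omega)
      have g1 : ((X^2 + C a * X + C b)^(n+1)).coeff (2*(n+1)) = 1 := by
        rw [show 2*(n+1) = 2*n+2 from rfl, E0, coeff_mul_aux, h1, z1, z2]; ring
      have g2 : ((X^2 + C a * X + C b)^(n+2)).coeff (2*(n+1)+1) = ((n:ℤ)+2)*a := by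
        have g1' : ((X^2 + C a * X + C b)^(n+1)).coeff (2*n+2) = 1 := g1
        rw [show 2*(n+1)+1 = (2*n+1)+2 from rfl, E1, coeff_mul_aux, h2]
        rw [show (2*n+1)+1 = 2*n+2 from rfl, show (2*n+1)+2 = 2*n+3 from rfl, g1', z3]
        ring
      have g3 : 2*((X^2 + C a * X + C b)^(n+2)).coeff (2*(n+1))
          = 2*((n:ℤ)+2)*b + ((n:ℤ)+2)*((n:ℤ)+1)*a^2 := by
        have E3 := coeff_mul_aux a b ((X^2 + C a*X + C b)^(n+1)) (2*n)
        rw [show 2*(n+1) = (2*n)+2 from rfl, E1]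
        have g1' : ((X^2 + C a * X + C b)^(n+1)).coeff (2*n+2) = 1 := g1
        linear_combination 2*E3 + h3 + 2*a*h2 + 2*b*g1'
      have g4 : 6*((X^2 + C a * X + C b)^(n+3)).coeff (2*(n+1)+1)
          = 6*((n:ℤ)+3)*((n:ℤ)+2)*a*b + ((n:ℤ)+3)*((n:ℤ)+2)*((n:ℤ)+1)*a^3 := by
        have E4 := coeff_mul_aux a b ((X^2 + C a*X + C b)^(n+2)) (2*n+1)
        rw [show 2*(n+1)+1 = (2*n+1)+2 from rfl, E2]
        have g3' : 2*((X^2 + C a * X + C b)^(n+2)).coeff (2*n+2)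
            = 2*((n:ℤ)+2)*b + ((n:ℤ)+2)*((n:ℤ)+1)*a^2 := g3
        have g2' : ((X^2 + C a * X + C b)^(n+2)).coeff (2*n+3) = ((n:ℤ)+2)*a := g2
        linear_combination 6*E4 + h4 + 3*a*g3' + 6*b*g2'
      refine ⟨g1, ?_, ?_, ?_⟩ <;> push_cast <;>
        [linear_combination g2; linear_combination g3; linear_combination g4]

/-- with s(n,k) the coefficient of x^k in
(x²+4x+3)^n + (x²−1)·(x²+3x+3)^n, we have s(n,2n+1) = 3n and 2·s(n,2n) = 3n·(3n−1)
for all n ≥ 0, and 2·s(n,2n−1) = n·(3n−1)·(3n−2) for all n ≥ 1. -/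
theorem stmt_17 :
    (∀ n : ℕ,
      ((X ^ 2 + 4 * X + 3) ^ n + (X ^ 2 - 1) * (X ^ 2 + 3 * X + 3) ^ n :
        Polynomial ℤ).coeff (2 * n + 1) = 3 * (n : ℤ)) ∧
    (∀ n : ℕ,
      2 * ((X ^ 2 + 4 * X + 3) ^ n + (X ^ 2 - 1) * (X ^ 2 + 3 * X + 3) ^ n :
        Polynomial ℤ).coeff (2 * n) = 3 * (n : ℤ) * (3 * n - 1)) ∧
    (∀ n : ℕ, 1 ≤ n →
      2 * ((X ^ 2 + 4 * X + 3) ^ n + (X ^ 2 - 1) * (X ^ 2 + 3 * X + 3) ^ n :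
        Polynomial ℤ).coeff (2 * n - 1) = (n : ℤ) * (3 * n - 1) * (3 * n - 2)) := by
  have e4 : (X^2 + 4*X + 3 : Polynomial ℤ) = X^2 + C 4 * X + C 3 := by norm_num
  have e3 : (X^2 + 3*X + 3 : Polynomial ℤ) = X^2 + C 3 * X + C 3 := by norm_num
  refine ⟨?_, ?_, ?_⟩
  · intro n
    rw [e4, e3]
    match n with
    | 0 => simp
    | m+1 =>
      obtain ⟨_, h2q, _, _⟩ := aux_main 3 3 m
      have zp : ((X^2 + C 4 * X + C 3 : Polynomial ℤ)^(m+1)).coeff (2*(m+1)+1) = 0 :=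
        vanish_aux 4 3 (m+1) _ (by omega)
      have zq : ((X^2 + C 3 * X + C 3 : Polynomial ℤ)^(m+1)).coeff (2*(m+1)+1) = 0 :=
        vanish_aux 3 3 (m+1) _ (by omega)
      have hx : (X^2 * ((X^2 + C 3 * X + C 3 : Polynomial ℤ)^(m+1))).coeff (2*(m+1)+1)
          = ((X^2 + C 3 * X + C 3 : Polynomial ℤ)^(m+1)).coeff (2*m+1) :=
        coeff_X_pow_mul _ 2 (2*m+1)
      rw [show ((X^2 - 1) * ((X^2 + C 3 * X + C 3 : Polynomial ℤ)^(m+1)))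
          = X^2 * ((X^2 + C 3 * X + C 3)^(m+1)) - (X^2 + C 3 * X + C 3)^(m+1) by ring]
      rw [coeff_add, coeff_sub, zp, zq, hx, h2q]
      push_cast; ring
  · intro n
    rw [e4, e3]
    match n with
    | 0 => simp
    | m+1 =>
      obtain ⟨_, _, h3q, _⟩ := aux_main 3 3 m
      obtain ⟨hp1, _, _, _⟩ := aux_main 4 3 (m+1)
      obtain ⟨hq1, _, _, _⟩ := aux_main 3 3 (m+1)
      have hx : (X^2 * ((X^2 + C 3 * X + C 3 : Polynomial ℤ)^(m+1))).coeff (2*(m+1))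
          = ((X^2 + C 3 * X + C 3 : Polynomial ℤ)^(m+1)).coeff (2*m) :=
        coeff_X_pow_mul _ 2 (2*m)
      rw [show ((X^2 - 1) * ((X^2 + C 3 * X + C 3 : Polynomial ℤ)^(m+1)))
          = X^2 * ((X^2 + C 3 * X + C 3)^(m+1)) - (X^2 + C 3 * X + C 3)^(m+1) by ring]
      rw [coeff_add, coeff_sub, hp1, hq1, hx]
      push_cast
      linear_combination h3q
  · intro n hn
    rw [e4, e3]
    match n, hn with
    | 1, _ =>
      have hA : ((X^2 + C 4 * X + C 3 : Polynomial ℤ)^1).coeff 1 = 4 := by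
        simp only [pow_one, coeff_add, coeff_C_mul, coeff_X, coeff_C, coeff_X_pow]
        norm_num
      have hD : ((X^2 + C 3 * X + C 3 : Polynomial ℤ)^1).coeff 1 = 3 := by
        simp only [pow_one, coeff_add, coeff_C_mul, coeff_X, coeff_C, coeff_X_pow]
        norm_num
      have hB : (X^2 * ((X^2 + C 3 * X + C 3 : Polynomial ℤ)^1)).coeff 1 = 0 := by
        rw [show (X^2 * ((X^2 + C 3 * X + C 3 : Polynomial ℤ)^1))
            = X*(X*((X^2 + C 3 * X + C 3)^1)) by ring, coeff_X_mul (n := 0)]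
        simp [mul_coeff_zero]
      rw [show ((X^2 - 1) * ((X^2 + C 3 * X + C 3 : Polynomial ℤ)^1))
          = X^2 * ((X^2 + C 3 * X + C 3)^1) - (X^2 + C 3 * X + C 3)^1 by ring]
      rw [show (2*1-1 : ℕ) = 1 from rfl, coeff_add, coeff_sub, hA, hD, hB]
      norm_num
    | m+2, _ =>
      obtain ⟨_, _, _, h4q⟩ := aux_main 3 3 m
      obtain ⟨_, hp2, _, _⟩ := aux_main 4 3 (m+1)
      obtain ⟨_, hq2, _, _⟩ := aux_main 3 3 (m+1)
      have hx : (X^2 * ((X^2 + C 3 * X + C 3 : Polynomial ℤ)^(m+2))).coeff (2*(m+2)-1)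
          = ((X^2 + C 3 * X + C 3 : Polynomial ℤ)^(m+2)).coeff (2*m+1) :=
        coeff_X_pow_mul _ 2 (2*m+1)
      have hp2' : ((X^2 + C 4 * X + C 3 : Polynomial ℤ)^(m+2)).coeff (2*(m+2)-1)
          = ((m:ℤ)+1+1)*4 := hp2
      have hq2' : ((X^2 + C 3 * X + C 3 : Polynomial ℤ)^(m+2)).coeff (2*(m+2)-1)
          = ((m:ℤ)+1+1)*3 := hq2
      have h6 : 6 * (((X^2 + C 4 * X + C 3)^(m+2)
            + (X^2 - 1) * (X^2 + C 3 * X + C 3)^(m+2) : Polynomial ℤ)).coeff (2*(m+2)-1)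
          = 3 * (((m:ℤ)+2) * (3*((m:ℤ)+2) - 1) * (3*((m:ℤ)+2) - 2)) := by
        rw [show ((X^2 - 1) * ((X^2 + C 3 * X + C 3 : Polynomial ℤ)^(m+2)))
            = X^2 * ((X^2 + C 3 * X + C 3)^(m+2)) - (X^2 + C 3 * X + C 3)^(m+2) by ring]
        rw [coeff_add, coeff_sub, hp2', hq2', hx]
        push_cast
        linear_combination h4q
      push_cast at h6 ⊢
      linarith [h6]
end
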